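/- Let G be a split graph on d−1 vertices with vertex partition into a clique C and a stable set S, and let Ḡ be its complement (a split graph with clique S and stable set C). Then s(H(G)) = f_p(G) + f_+(G) + f_-(G) + f_p(Ḡ) − 1, where f_p(G) is the number of primitive faces of H(G), f_+(G) and f_-(G) are the numbers of positive and negative faces of H(G), and f_p(Ḡ) is the number of primitive faces of H(Ḡ); equivalently, the number of nonempty small faces of H(G) equals f_p(Ḡ) − 1. -/

import Mathlib

/-- A finset of vertices is stable (independent) in `G` if no two of its elements are adjacent. -/
def IsStable {n : ℕ} (G : SimpleGraph (Fin n)) (I : Finset (Fin n)) : Prop :=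
  ∀ ⦃a⦄, a ∈ I → ∀ ⦃b⦄, b ∈ I → ¬ G.Adj a b

/-- The point `e_0 + ∑_{i ∈ I} e_i ∈ ℝ^{n+1}`. -/
def hansenVert {n : ℕ} (I : Finset (Fin n)) : Fin (n + 1) → ℝ :=
  fun j => Fin.cases 1 (fun i => if i ∈ I then 1 else 0) j

/-- The Hansen polytope of `G`. -/
def hansenPolytope {n : ℕ} (G : SimpleGraph (Fin n)) : Set (Fin (n + 1) → ℝ) :=
  convexHull ℝ
    {x | ∃ I : Finset (Fin n), IsStable G I ∧ (x = hansenVert I ∨ x = -hansenVert I)}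

/-- The face `[ε, K] = { x ∈ H(G) : ε·(−x_0 + 2·∑_{i ∈ K} x_i) = 1 }` of the Hansen
polytope, for a sign `ε` and a clique `K`. -/
def hFace {n : ℕ} (G : SimpleGraph (Fin n)) (ε : ℝ) (K : Finset (Fin n)) :
    Set (Fin (n + 1) → ℝ) :=
  {x ∈ hansenPolytope G | ε * (-(x 0) + 2 * (∑ i ∈ K, x i.succ)) = 1}

/-- The number of nonempty (exposed) faces of a polytope `P ⊆ ℝ^d`, including `P` itself. -/
noncomputable def numFaces {d : ℕ} (P : Set (Fin d → ℝ)) : ℕ :=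
  {F : Set (Fin d → ℝ) | IsExposed ℝ P F ∧ F.Nonempty}.ncard

/-- `f_p`: the number of primitive faces of `H(G)`, i.e. nonempty exposed faces contained
in no type-(1)-facet `[ε, B]` with `B ⊆ C`. -/
noncomputable def primCount {n : ℕ} (G : SimpleGraph (Fin n)) (C : Finset (Fin n)) : ℕ :=
  {F : Set (Fin (n + 1) → ℝ) | IsExposed ℝ (hansenPolytope G) F ∧ F.Nonempty ∧
    (∀ ε : ℝ, (ε = 1 ∨ ε = -1) → ∀ B ⊆ C, ¬ F ⊆ hFace G ε B)}.ncard

/-- The number of nonempty exposed faces of `H(G)` contained in a type-(1)-facet of sign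
`ε` but in none of sign `−ε` (positive faces for `ε = 1`, negative faces for `ε = −1`). -/
noncomputable def signedCount {n : ℕ} (G : SimpleGraph (Fin n)) (C : Finset (Fin n))
    (ε : ℝ) : ℕ :=
  {F : Set (Fin (n + 1) → ℝ) | IsExposed ℝ (hansenPolytope G) F ∧ F.Nonempty ∧
    (∃ B ⊆ C, F ⊆ hFace G ε B) ∧ (∀ B' ⊆ C, ¬ F ⊆ hFace G (-ε) B')}.ncard

/-- The number of nonempty small faces of `H(G)`: faces contained in type-(1)-facets of
both signs. -/
noncomputable def smallCount {n : ℕ} (G : SimpleGraph (Fin n)) (C : Finset (Fin n)) : ℕ :=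
  {F : Set (Fin (n + 1) → ℝ) | IsExposed ℝ (hansenPolytope G) F ∧ F.Nonempty ∧
    (∃ B ⊆ C, F ⊆ hFace G 1 B) ∧ (∃ B' ⊆ C, F ⊆ hFace G (-1) B')}.ncard

/-!
For a split graph `G = C ⊔ S`, the Hansen polytopes `H(G)` and `H(Ḡ)` are polar to each other
under the pairing `⟪y, x⟫ = -y₀x₀ + 2∑ᵢ yᵢxᵢ`: `H(G)` is cut out by the inequalities
`|⟪w, x⟫| ≤ 1` for the vertices `w = ±(e₀ + ∑_{i ∈ K} eᵢ)` of `H(Ḡ)`, `K` a clique of `G`, and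
symmetrically. One inclusion holds because a clique and a stable set share at most one vertex.
For the other, every extreme point of the polar agrees on its tight inequalities with a vertex
`±(e₀ + ∑_{i ∈ I} eᵢ)` of `H(G)`, hence equals it; the stable set `I` is built from the positive
coordinates, using the split structure.

Polarity makes `F ↦ F^◇ = {y ∈ H(Ḡ) | ⟪y, x⟫ = 1 on F}` an inclusion-reversing bijection between
the nonempty proper faces of the two polytopes. A small face lies on facets `[1, B₁]` and
`[-1, B₂]` with `B₁, B₂ ⊆ C`, so `F^◇` contains `e₀ + ∑_{B₁} eᵢ` and `-(e₀ + ∑_{B₂} eᵢ)`, which lie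
on no type-(1)-facet `[ε, B]`, `B ⊆ S`, of `H(Ḡ)`. Conversely a primitive face of `H(Ḡ)` contains
vertices of both signs supported in `C`, and their dual facets contain `F^◇`. So the small faces of
`H(G)` correspond to the primitive faces of `H(Ḡ)` other than `H(Ḡ)` itself, and the formula
follows by sorting the faces of `H(G)` into primitive, positive, negative and small ones.
-/

theorem Set.ncard_setOf_eq_add {α : Type*} {r : α → Prop} (hr : {a | r a}.Finite)
    (p : α → Prop) : {a | r a}.ncard = {a | r a ∧ p a}.ncard + {a | r a ∧ ¬ p a}.ncard :=
  (Set.ncard_inter_add_ncard_sdiff_eq_ncard {a | r a} {a | p a} hr).symm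

section Polytope

variable {E : Type*} [NormedAddCommGroup E] [NormedSpace ℝ E] {A V F : Set E}

theorem IsExposed.eq_convexHull_inter (hV : V.Finite) (hF : IsExposed ℝ (convexHull ℝ V) F) :
    F = convexHull ℝ (V ∩ F) := by
  have hFcomp := hF.isCompact (hV.isCompact_convexHull ℝ)
  have hFconv := hF.convex (convex_convexHull ℝ V)
  refine (convexHull_min Set.inter_subset_right hFconv).antisymm' ?_
  calc F = closure (convexHull ℝ (F.extremePoints ℝ)) :=
        (closure_convexHull_extremePoints hFcomp hFconv).symm
    _ ⊆ closure (convexHull ℝ (V ∩ F)) := by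
        refine closure_mono (convexHull_mono fun x hx => ⟨?_, hx.1⟩)
        exact extremePoints_convexHull_subset (hF.isExtreme.extremePoints_subset_extremePoints hx)
    _ = convexHull ℝ (V ∩ F) := ((hV.inter_of_left F).isCompact_convexHull ℝ).isClosed.closure_eq

theorem finite_setOf_isExposed_convexHull (hV : V.Finite) :
    {F | IsExposed ℝ (convexHull ℝ V) F}.Finite := by
  refine Set.Finite.of_finite_image (f := (V ∩ ·)) (hV.finite_subsets.subset ?_) ?_
  · rintro _ ⟨F, -, rfl⟩
    exact Set.inter_subset_left
  · intro F₁ h₁ F₂ h₂ h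
    rw [h₁.eq_convexHull_inter hV, h₂.eq_convexHull_inter hV]
    exact congrArg _ h

theorem isExposed_setOf_eq_of_forall_le (l : E →L[ℝ] ℝ) {r : ℝ} (h : ∀ x ∈ A, l x ≤ r) :
    IsExposed ℝ A {x ∈ A | l x = r} := by
  rintro ⟨x₀, hx₀A, hx₀⟩
  refine ⟨l, Set.ext fun x => and_congr_right fun hx => ⟨fun hr y hy => hr ▸ h y hy, ?_⟩⟩
  exact fun hmax => (h x hx).antisymm (hx₀ ▸ hmax x₀ hx₀A)

end Polytope

section PolarPair

variable {E : Type*} [NormedAddCommGroup E] [NormedSpace ℝ E] {B : LinearMap.BilinForm ℝ E}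
  {V W F : Set E}

def dualFace (B : LinearMap.BilinForm ℝ E) (A F : Set E) : Set E :=
  {y ∈ A | ∀ x ∈ F, B y x = 1}

theorem convex_polar (B : LinearMap.BilinForm ℝ E) (W : Set E) : Convex ℝ (B.polar W) := by
  rw [LinearMap.polar_eq_iInter]
  refine convex_iInter₂ fun w _ => ?_
  simpa only [Set.preimage, mem_closedBall_zero_iff] using
    (convex_closedBall (0 : ℝ) 1).linear_preimage (B w)

theorem isClosed_polar [FiniteDimensional ℝ E] (B : LinearMap.BilinForm ℝ E) (W : Set E) :
    IsClosed (B.polar W) := by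
  rw [LinearMap.polar_eq_iInter]
  exact isClosed_biInter fun w _ =>
    isClosed_le ((B w).continuous_of_finiteDimensional.norm) continuous_const

theorem convexHull_subset_polar (hVW : V ⊆ B.polar W) : convexHull ℝ V ⊆ B.polar W :=
  convexHull_min hVW (convex_polar B W)

theorem eq_of_mem_extremePoints_polar [FiniteDimensional ℝ E] (hW : W.Finite) {x v : E}
    (hx : x ∈ (B.polar W).extremePoints ℝ)
    (htight : ∀ w ∈ W, ‖B w x‖ = 1 → B w v = B w x) : x = v := by
  -- along the line through `x` and `v` the tight inequalities stay tight
  -- and the finitely many slack ones stay satisfied near `x`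
  have hline : ∀ᶠ t in nhds (0 : ℝ), x + t • (v - x) ∈ B.polar W := by
    refine (Filter.eventually_all_finite hW).2 fun w hw => ?_
    have hB : ∀ t : ℝ, B w (x + t • (v - x)) = B w x + t * (B w v - B w x) := fun t => by
      simp only [map_add, map_smul, map_sub, smul_eq_mul]
    by_cases hxw : ‖B w x‖ = 1
    · exact Filter.Eventually.of_forall fun t => by rw [hB, htight w hw hxw]; simp [hxw]
    · have hlt : ‖B w x + (0 : ℝ) * (B w v - B w x)‖ < 1 := by
        simpa using lt_of_le_of_ne (hx.1 w hw) hxw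
      simp only [hB]
      exact ((Continuous.tendsto (by fun_prop) 0).eventually_lt_const hlt).mono fun t ht => ht.le
  obtain ⟨ε, hε, hball⟩ := Metric.eventually_nhds_iff.1 hline
  have hmem : ∀ s : ℝ, |s| = ε / 2 → x + s • (v - x) ∈ B.polar W := fun s hs =>
    hball (by rw [Real.dist_eq, sub_zero, hs]; linarith)
  have hseg : x ∈ openSegment ℝ (x + (-(ε / 2)) • (v - x)) (x + (ε / 2) • (v - x)) :=
    ⟨1 / 2, 1 / 2, by norm_num, by norm_num, by norm_num, by module⟩
  have h := ((mem_extremePoints.1 hx).2 _ (hmem _ (by rw [abs_neg, abs_of_pos (by linarith)]))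
    _ (hmem _ (abs_of_pos (by linarith))) hseg).2
  rw [add_eq_left, smul_eq_zero, sub_eq_zero] at h
  exact (h.resolve_left (by linarith)).symm

theorem convexHull_eq_polar [FiniteDimensional ℝ E] (hV : V.Finite) (hW : W.Finite)
    (hVW : V ⊆ B.polar W) (hcomp : IsCompact (B.polar W))
    (htight : ∀ x ∈ B.polar W, ∃ v ∈ V, ∀ w ∈ W, ‖B w x‖ = 1 → B w v = B w x) :
    convexHull ℝ V = B.polar W := by
  refine (convexHull_subset_polar hVW).antisymm ?_
  rw [← closure_convexHull_extremePoints hcomp (convex_polar B W)]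
  refine closure_minimal (convexHull_mono fun x hx => ?_) (hV.isCompact_convexHull ℝ).isClosed
  obtain ⟨v, hvV, hv⟩ := htight x hx.1
  rwa [eq_of_mem_extremePoints_polar hW hx hv]

theorem dualFace_dualFace (hB : B.IsSymm) {A A' : Set E} {y₀ : E} (hy₀ : y₀ ∈ A')
    (hF : F = {x ∈ A | B y₀ x = 1}) : dualFace B A (dualFace B A' F) = F := by
  have hy₀F : y₀ ∈ dualFace B A' F := ⟨hy₀, fun x hx => (hF ▸ hx).2⟩
  ext x
  refine ⟨fun hx => hF ▸ ⟨hx.1, hB.eq x y₀ ▸ hx.2 y₀ hy₀F⟩, fun hx => ⟨(hF ▸ hx).1, ?_⟩⟩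
  exact fun y hy => hB.eq y x ▸ hy.2 x hx

structure IsPolarPair (B : LinearMap.BilinForm ℝ E) (V W : Set E) : Prop where
  finite_left : V.Finite
  finite_right : W.Finite
  convexHull_left : convexHull ℝ V = B.polar W
  convexHull_right : convexHull ℝ W = B.polar V

namespace IsPolarPair

theorem symm (h : IsPolarPair B V W) : IsPolarPair B W V :=
  ⟨h.finite_right, h.finite_left, h.convexHull_right, h.convexHull_left⟩

theorem neg_mem_left (h : IsPolarPair B V W) {x : E} (hx : x ∈ convexHull ℝ V) :
    -x ∈ convexHull ℝ V := by
  rw [h.convexHull_left] at hx ⊢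
  intro w hw
  simpa using hx w hw

theorem apply_le_one (h : IsPolarPair B V W) {x y : E} (hy : y ∈ convexHull ℝ W)
    (hx : x ∈ convexHull ℝ V) : B y x ≤ 1 := by
  rw [h.convexHull_left] at hx
  refine convexHull_min (fun w hw => ?_) (convex_halfSpace_le (B.flip x).isLinear 1) hy
  exact (le_abs_self _).trans (hx w hw)

theorem exists_eq_setOf_apply_eq_one (h : IsPolarPair B V W) (hB : B.IsSymm)
    (hBs : Function.Surjective B) (hF : IsExposed ℝ (convexHull ℝ V) F) (hne : F.Nonempty)
    (hFV : F ≠ convexHull ℝ V) :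
    ∃ y₀ ∈ convexHull ℝ W, F = {x ∈ convexHull ℝ V | B y₀ x = 1} := by
  obtain ⟨l, rfl⟩ := hF hne
  obtain ⟨x₁, hx₁, hmax⟩ := hne
  obtain ⟨m, hm⟩ := hBs l.toLinearMap
  have hBm : ∀ x, B m x = l x := fun x => congrArg (· x) hm
  have hbound : ∀ x ∈ convexHull ℝ V, |l x| ≤ l x₁ := fun x hx =>
    abs_le.2 ⟨neg_le.1 (by simpa using hmax (-x) (h.neg_mem_left hx)), hmax x hx⟩
  have hpos : 0 < l x₁ := by
    by_contra! h0
    refine hFV (Set.ext fun x => ⟨fun hx => hx.1, fun hx => ⟨hx, fun y hy => ?_⟩⟩)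
    linarith [neg_abs_le (l x), hbound x hx, hbound y hy, le_abs_self (l y)]
  refine ⟨(l x₁)⁻¹ • m, ?_, Set.ext fun x => and_congr_right fun hx => ?_⟩
  · rw [h.convexHull_right]
    intro v hv
    rw [← hB.eq, map_smul, LinearMap.smul_apply, hBm, smul_eq_mul, norm_mul, Real.norm_eq_abs,
      Real.norm_eq_abs, abs_inv, abs_of_pos hpos, inv_mul_le_one₀ hpos]
    exact hbound v (subset_convexHull ℝ V hv)
  · rw [map_smul, LinearMap.smul_apply, hBm, smul_eq_mul, inv_mul_eq_one₀ hpos.ne']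
    exact ⟨fun hmx => (hmx x₁ hx₁).antisymm (hmax x hx), fun hx₁x y hy => hx₁x ▸ hmax y hy⟩

theorem isExposed_dualFace [FiniteDimensional ℝ E] (h : IsPolarPair B V W)
    (hF : IsExposed ℝ (convexHull ℝ V) F) :
    IsExposed ℝ (convexHull ℝ W) (dualFace B (convexHull ℝ W) F) := by
  classical
  set s := (h.finite_left.inter_of_left F).toFinset
  have hle : ∀ y ∈ convexHull ℝ W, ∀ v ∈ s, B y v ≤ 1 := fun y hy v hv =>
    h.apply_le_one hy (subset_convexHull ℝ V (Set.Finite.mem_toFinset _ |>.1 hv).1)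
  -- `F^◇` is exposed by the sum of the vertices of `F`
  have hdual : dualFace B (convexHull ℝ W) F =
      {y ∈ convexHull ℝ W | B y (∑ v ∈ s, v) = ∑ v ∈ s, (1 : ℝ)} := by
    refine Set.ext fun y => and_congr_right fun hy => ?_
    rw [map_sum, Finset.sum_eq_sum_iff_of_le (hle y hy)]
    refine ⟨fun hyF v hv => hyF v (Set.Finite.mem_toFinset _ |>.1 hv).2, fun hys => ?_⟩
    rw [hF.eq_convexHull_inter h.finite_left]
    refine convexHull_min (fun v hv => hys v ((Set.Finite.mem_toFinset _).2 hv)) ?_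
    exact convex_hyperplane (B y).isLinear 1
  rw [hdual]
  refine isExposed_setOf_eq_of_forall_le (LinearMap.toContinuousLinearMap (B.flip _)) ?_
  intro y hy
  simpa [map_sum] using Finset.sum_le_sum (hle y hy)

theorem dualFace_spec [FiniteDimensional ℝ E] (h : IsPolarPair B V W) (hB : B.IsSymm)
    (hBs : Function.Surjective B) (hF : IsExposed ℝ (convexHull ℝ V) F) (hne : F.Nonempty)
    (hFV : F ≠ convexHull ℝ V) :
    IsExposed ℝ (convexHull ℝ W) (dualFace B (convexHull ℝ W) F) ∧
      (dualFace B (convexHull ℝ W) F).Nonempty ∧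
      dualFace B (convexHull ℝ W) F ≠ convexHull ℝ W ∧
      dualFace B (convexHull ℝ V) (dualFace B (convexHull ℝ W) F) = F := by
  obtain ⟨y₀, hy₀, hFy₀⟩ := h.exists_eq_setOf_apply_eq_one hB hBs hF hne hFV
  have hy₀F : y₀ ∈ dualFace B (convexHull ℝ W) F := ⟨hy₀, fun x hx => (hFy₀ ▸ hx).2⟩
  refine ⟨h.isExposed_dualFace hF, ⟨y₀, hy₀F⟩, fun heq => ?_, dualFace_dualFace hB hy₀ hFy₀⟩
  obtain ⟨x, hx⟩ := hne
  have hneg : -y₀ ∈ dualFace B (convexHull ℝ W) F := by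
    rw [heq]
    exact h.symm.neg_mem_left hy₀
  have h1 := hneg.2 x hx
  rw [map_neg, LinearMap.neg_apply, hy₀F.2 x hx] at h1
  norm_num at h1

end IsPolarPair

end PolarPair

theorem abs_eq_one_of_sign {ε : ℝ} (hε : ε = 1 ∨ ε = -1) : |ε| = 1 := by
  rcases hε with rfl | rfl <;> norm_num

theorem mul_self_eq_one_of_sign {ε : ℝ} (hε : ε = 1 ∨ ε = -1) : ε * ε = 1 := by
  rcases hε with rfl | rfl <;> norm_num

section Graph

variable {n : ℕ} {G : SimpleGraph (Fin n)}

theorem IsStable.subset {S I : Finset (Fin n)} (hS : IsStable G S) (h : I ⊆ S) : IsStable G I :=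
  fun _ ha _ hb => hS (h ha) (h hb)

theorem isStable_empty : IsStable G ∅ :=
  fun _ ha => absurd ha (Finset.notMem_empty _)

theorem isStable_compl_iff {K : Finset (Fin n)} :
    IsStable Gᶜ K ↔ G.IsClique (K : Set (Fin n)) := by
  refine ⟨fun h a ha b hb hab => ?_, fun h a ha b hb hadj => (G.compl_adj a b).1 hadj |>.2 ?_⟩
  · by_contra hnadj
    exact h ha hb ((G.compl_adj a b).2 ⟨hab, hnadj⟩)
  · exact h ha hb ((G.compl_adj a b).1 hadj).1

theorem IsStable.isClique_compl {S : Finset (Fin n)} (hS : IsStable G S) :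
    Gᶜ.IsClique (S : Set (Fin n)) := by
  rwa [← isStable_compl_iff, compl_compl]

theorem IsStable.card_inter_le_one {K I : Finset (Fin n)} (hI : IsStable G I)
    (hK : G.IsClique (K : Set (Fin n))) : (K ∩ I).card ≤ 1 :=
  Finset.card_le_one.2 fun a ha b hb => by
    by_contra hab
    rw [Finset.mem_inter] at ha hb
    exact hI ha.2 hb.2 (hK ha.1 hb.1 hab)

theorem mem_right_of_union_eq_univ {C S : Finset (Fin n)} (hcover : C ∪ S = Finset.univ)
    {v : Fin n} (hv : v ∉ C) : v ∈ S :=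
  (Finset.mem_union.1 (hcover ▸ Finset.mem_univ v)).resolve_left hv

end Graph

section Hansen

variable {n : ℕ} {G : SimpleGraph (Fin n)}

def hansenPairing : LinearMap.BilinForm ℝ (Fin (n + 1) → ℝ) :=
  LinearMap.mk₂ ℝ (fun y x => -(y 0 * x 0) + 2 * ∑ i : Fin n, y i.succ * x i.succ)
    (fun y₁ y₂ x => by simp only [Pi.add_apply, add_mul, Finset.sum_add_distrib]; ring)
    (fun c y x => by simp only [Pi.smul_apply, smul_eq_mul, mul_assoc, ← Finset.mul_sum]; ring)
    (fun y x₁ x₂ => by simp only [Pi.add_apply, mul_add, Finset.sum_add_distrib]; ring)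
    (fun c y x => by
      simp only [Pi.smul_apply, smul_eq_mul, mul_left_comm _ c, ← Finset.mul_sum]; ring)

theorem hansenPairing_apply (y x : Fin (n + 1) → ℝ) :
    hansenPairing y x = -(y 0 * x 0) + 2 * ∑ i : Fin n, y i.succ * x i.succ := rfl

theorem hansenPairing_isSymm : (hansenPairing (n := n)).IsSymm :=
  ⟨fun y x => by simp only [hansenPairing_apply, mul_comm]⟩

theorem hansenPairing_surjective : Function.Surjective (hansenPairing (n := n)) := by
  classical
  intro l
  set e : Fin (n + 1) → Fin (n + 1) → ℝ := fun j k => if j = k then 1 else 0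
  refine ⟨Fin.cons (-l (e 0)) fun i => l (e i.succ) / 2, LinearMap.ext fun x => ?_⟩
  rw [hansenPairing_apply, l.pi_apply_eq_sum_univ x, Fin.sum_univ_succ, Finset.mul_sum]
  simp only [Fin.cons_zero, Fin.cons_succ, smul_eq_mul]
  congr 1
  · ring
  · exact Finset.sum_congr rfl fun i _ => by ring

theorem hansenVert_zero (I : Finset (Fin n)) : hansenVert I 0 = 1 := rfl

theorem hansenVert_succ (I : Finset (Fin n)) (i : Fin n) :
    hansenVert I i.succ = if i ∈ I then 1 else 0 := rfl

theorem hansenVert_eq_add_single {I : Finset (Fin n)} {c : Fin n} (h : c ∈ I) :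
    hansenVert I = hansenVert (I.erase c) + Pi.single c.succ 1 := by
  funext j
  refine Fin.cases ?_ (fun i => ?_) j
  · simp [hansenVert_zero, Fin.succ_ne_zero]
  · by_cases hic : i = c
    · subst hic
      simp [hansenVert_succ, h]
    · simp [hansenVert_succ, Finset.mem_erase, hic]

theorem hansenPairing_hansenVert (K : Finset (Fin n)) (x : Fin (n + 1) → ℝ) :
    hansenPairing (hansenVert K) x = -(x 0) + 2 * ∑ i ∈ K, x i.succ := by
  simp [hansenPairing_apply, hansenVert_zero, hansenVert_succ, ite_mul, Finset.sum_ite_mem]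

theorem hansenPairing_hansenVert_erase {K : Finset (Fin n)} {v : Fin n} (hv : v ∈ K)
    (x : Fin (n + 1) → ℝ) :
    hansenPairing (hansenVert K) x = hansenPairing (hansenVert (K.erase v)) x + 2 * x v.succ := by
  rw [hansenPairing_hansenVert, hansenPairing_hansenVert, ← Finset.add_sum_erase K _ hv]
  ring

theorem hansenPairing_hansenVert_hansenVert (K I : Finset (Fin n)) :
    hansenPairing (hansenVert K) (hansenVert I) = 2 * ((K ∩ I).card : ℝ) - 1 := by
  rw [hansenPairing_hansenVert, hansenVert_zero]
  simp [hansenVert_succ, Finset.sum_ite_mem]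
  ring

theorem mem_hFace {ε : ℝ} {K : Finset (Fin n)} {x : Fin (n + 1) → ℝ} :
    x ∈ hFace G ε K ↔ x ∈ hansenPolytope G ∧ hansenPairing (ε • hansenVert K) x = 1 := by
  rw [map_smul, LinearMap.smul_apply, hansenPairing_hansenVert]
  rfl

def hansenVerts (G : SimpleGraph (Fin n)) : Set (Fin (n + 1) → ℝ) :=
  {x | ∃ ε : ℝ, (ε = 1 ∨ ε = -1) ∧ ∃ I, IsStable G I ∧ x = ε • hansenVert I}

theorem hansenPolytope_eq_convexHull (G : SimpleGraph (Fin n)) :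
    hansenPolytope G = convexHull ℝ (hansenVerts G) := by
  refine congrArg _ (Set.ext fun x => ⟨?_, ?_⟩)
  · rintro ⟨I, hI, rfl | rfl⟩
    exacts [⟨1, Or.inl rfl, I, hI, (one_smul ℝ _).symm⟩,
      ⟨-1, Or.inr rfl, I, hI, (neg_one_smul ℝ _).symm⟩]
  · rintro ⟨ε, rfl | rfl, I, hI, rfl⟩
    exacts [⟨I, hI, Or.inl (one_smul ℝ _)⟩, ⟨I, hI, Or.inr (neg_one_smul ℝ _)⟩]

theorem hansenVerts_finite (G : SimpleGraph (Fin n)) : (hansenVerts G).Finite := by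
  refine (((Set.toFinite ({1, -1} : Set ℝ)).prod (Set.univ : Set (Finset (Fin n))).toFinite).image
    fun p => p.1 • hansenVert p.2).subset ?_
  rintro _ ⟨ε, hε, I, -, rfl⟩
  exact ⟨(ε, I), ⟨hε, trivial⟩, rfl⟩

theorem smul_hansenVert_mem {ε : ℝ} {I : Finset (Fin n)} (hε : ε = 1 ∨ ε = -1)
    (hI : IsStable G I) : ε • hansenVert I ∈ hansenPolytope G := by
  rw [hansenPolytope_eq_convexHull]
  exact subset_convexHull ℝ _ ⟨ε, hε, I, hI, rfl⟩

theorem hansenPairing_smul_hansenVert_of_disjoint {ε : ℝ} (hε : ε = 1 ∨ ε = -1)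
    {K I : Finset (Fin n)} (h : Disjoint K I) :
    hansenPairing (ε • hansenVert K) (ε • hansenVert I) = -1 := by
  rw [map_smul, map_smul, LinearMap.smul_apply, hansenPairing_hansenVert_hansenVert,
    Finset.disjoint_iff_inter_eq_empty.1 h, smul_eq_mul, smul_eq_mul, ← mul_assoc,
    mul_self_eq_one_of_sign hε]
  norm_num

theorem smul_hansenVert_not_mem_hFace {ε : ℝ} (hε : ε = 1 ∨ ε = -1) {K I : Finset (Fin n)}
    (h : Disjoint K I) : ε • hansenVert I ∉ hFace G ε K := fun hmem => by
  have := (mem_hFace.1 hmem).2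
  rw [hansenPairing_smul_hansenVert_of_disjoint hε h] at this
  norm_num at this

theorem hansenPolytope_not_subset_hFace {ε : ℝ} (hε : ε = 1 ∨ ε = -1) (K : Finset (Fin n)) :
    ¬ hansenPolytope G ⊆ hFace G ε K := fun h =>
  smul_hansenVert_not_mem_hFace hε (Finset.disjoint_empty_right K)
    (h (smul_hansenVert_mem hε isStable_empty))

theorem mem_polar_hansenVerts_compl {x : Fin (n + 1) → ℝ} :
    x ∈ hansenPairing.polar (hansenVerts Gᶜ) ↔
      ∀ K : Finset (Fin n), G.IsClique (K : Set (Fin n)) →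
        |hansenPairing (hansenVert K) x| ≤ 1 := by
  refine ⟨fun hx K hK => ?_, ?_⟩
  · simpa using hx _ ⟨1, Or.inl rfl, K, isStable_compl_iff.2 hK, (one_smul ℝ _).symm⟩
  · rintro hx _ ⟨ε, hε, K, hK, rfl⟩
    rw [map_smul, LinearMap.smul_apply, norm_smul, Real.norm_eq_abs, Real.norm_eq_abs,
      abs_eq_one_of_sign hε, one_mul]
    exact hx K (isStable_compl_iff.1 hK)

theorem hansenVerts_subset_polar (G : SimpleGraph (Fin n)) :
    hansenVerts G ⊆ hansenPairing.polar (hansenVerts Gᶜ) := by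
  rintro _ ⟨ε, hε, I, hI, rfl⟩
  refine mem_polar_hansenVerts_compl.2 fun K hK => ?_
  rw [map_smul, smul_eq_mul, abs_mul, abs_eq_one_of_sign hε, one_mul,
    hansenPairing_hansenVert_hansenVert]
  have := hI.card_inter_le_one hK
  interval_cases (K ∩ I).card <;> norm_num

theorem isCompact_polar_hansenVerts_compl (G : SimpleGraph (Fin n)) :
    IsCompact (hansenPairing.polar (hansenVerts Gᶜ)) := by
  refine Metric.isCompact_of_isClosed_isBounded (isClosed_polar _ _)
    (Metric.isBounded_closedBall (x := 0) (r := 1) |>.subset fun x hx => ?_)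
  have h := mem_polar_hansenVerts_compl.1 hx
  have h0 : |x 0| ≤ 1 := by simpa [hansenPairing_hansenVert] using h ∅ (by simp)
  rw [mem_closedBall_zero_iff, pi_norm_le_iff_of_nonneg zero_le_one]
  refine Fin.cases (by simpa using h0) fun i => ?_
  have hi := h {i} (by simp)
  rw [hansenPairing_hansenVert, Finset.sum_singleton] at hi
  rw [Real.norm_eq_abs, abs_le] at *
  constructor <;> linarith

end Hansen

section Split

variable {n : ℕ} {G : SimpleGraph (Fin n)} {C S : Finset (Fin n)} {x : Fin (n + 1) → ℝ}

theorem nonneg_of_hansenPairing_eq_one (hx : x ∈ hansenPairing.polar (hansenVerts Gᶜ))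
    {K : Finset (Fin n)} (hK : G.IsClique (K : Set (Fin n)))
    (hK1 : hansenPairing (hansenVert K) x = 1) {v : Fin n} (hv : v ∈ K) : 0 ≤ x v.succ := by
  have := (abs_le.1 (mem_polar_hansenVerts_compl.1 hx _
    (hK.subset (Finset.coe_subset.2 (K.erase_subset v))))).2
  rw [hansenPairing_hansenVert_erase hv] at hK1
  linarith

theorem nonpos_of_hansenPairing_eq_neg_one (hx : x ∈ hansenPairing.polar (hansenVerts Gᶜ))
    {K : Finset (Fin n)} (hK : G.IsClique (K : Set (Fin n)))
    (hK1 : hansenPairing (hansenVert K) x = -1) {v : Fin n} (hv : v ∈ K) : x v.succ ≤ 0 := by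
  have := (abs_le.1 (mem_polar_hansenVerts_compl.1 hx _
    (hK.subset (Finset.coe_subset.2 (K.erase_subset v))))).1
  rw [hansenPairing_hansenVert_erase hv] at hK1
  linarith

theorem hansenPairing_filter_pos (hx : x ∈ hansenPairing.polar (hansenVerts Gᶜ))
    {K : Finset (Fin n)} (hK : G.IsClique (K : Set (Fin n)))
    (hK1 : hansenPairing (hansenVert K) x = 1) :
    hansenPairing (hansenVert (K.filter fun v => 0 < x v.succ)) x = 1 := by
  have hpos := fun v hv => nonneg_of_hansenPairing_eq_one hx hK hK1 (v := v) hv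
  rw [hansenPairing_hansenVert] at hK1 ⊢
  rwa [Finset.sum_filter_of_ne fun v hv hne => (hpos v hv).lt_of_ne' hne]

theorem exists_isStable_meets_tight_of_pos (hcover : C ∪ S = Finset.univ)
    (hC : G.IsClique (C : Set (Fin n))) (hS : IsStable G S)
    (hx : x ∈ hansenPairing.polar (hansenVerts Gᶜ)) {c : Fin n} (hcC : c ∈ C)
    (hc : 0 < x c.succ) :
    ∃ I, IsStable G I ∧ (∀ v ∈ I, 0 < x v.succ) ∧ ∀ K : Finset (Fin n),
      G.IsClique (K : Set (Fin n)) → hansenPairing (hansenVert K) x = 1 → (K ∩ I).Nonempty := by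
  classical
  refine ⟨insert c (S.filter fun s => 0 < x s.succ ∧ ¬ G.Adj c s), ?_, ?_, fun K hK hK1 => ?_⟩
  · intro a ha b hb
    simp only [Finset.mem_insert, Finset.mem_filter] at ha hb
    rcases ha with rfl | ha <;> rcases hb with rfl | hb
    exacts [G.irrefl, hb.2.2, fun h => ha.2.2 h.symm, hS ha.1 hb.1]
  · simp only [Finset.mem_insert, Finset.mem_filter]
    rintro v (rfl | hv)
    exacts [hc, hv.2.1]
  by_cases hcK : c ∈ K
  · exact ⟨c, Finset.mem_inter.2 ⟨hcK, Finset.mem_insert_self _ _⟩⟩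
  -- adding `c` to the positive part of the tight clique `K` would violate `hx`
  set K' := K.filter fun v => 0 < x v.succ
  have hcK' : c ∉ K' := fun h => hcK (Finset.mem_filter.1 h).1
  obtain ⟨v, hvK', hadj⟩ : ∃ v ∈ K', ¬ G.Adj c v := by
    by_contra! hall
    have hins : G.IsClique (insert c K' : Finset (Fin n)) := by
      rw [Finset.coe_insert]
      exact (hK.subset (Finset.coe_subset.2 (K.filter_subset _))).insert fun v hv _ => hall v hv
    have := (abs_le.1 (mem_polar_hansenVerts_compl.1 hx _ hins)).2
    rw [hansenPairing_hansenVert_erase (Finset.mem_insert_self c K'), Finset.erase_insert hcK',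
      hansenPairing_filter_pos hx hK hK1] at this
    linarith
  obtain ⟨hvK, hvpos⟩ := Finset.mem_filter.1 hvK'
  have hvS : v ∈ S :=
    mem_right_of_union_eq_univ hcover fun hvC => hadj (hC hcC hvC fun h => hcK (h ▸ hvK))
  exact ⟨v, Finset.mem_inter.2 ⟨hvK,
    Finset.mem_insert_of_mem (Finset.mem_filter.2 ⟨hvS, hvpos, hadj⟩)⟩⟩

theorem exists_isStable_meets_tight_of_nonpos (hcover : C ∪ S = Finset.univ) (hS : IsStable G S)
    (hx : x ∈ hansenPairing.polar (hansenVerts Gᶜ)) (hx0 : x 0 ≠ -1)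
    (hC : ∀ c ∈ C, x c.succ ≤ 0) :
    ∃ I, IsStable G I ∧ (∀ v ∈ I, 0 < x v.succ) ∧ ∀ K : Finset (Fin n),
      G.IsClique (K : Set (Fin n)) → hansenPairing (hansenVert K) x = 1 → (K ∩ I).Nonempty := by
  classical
  refine ⟨S.filter fun s => 0 < x s.succ, hS.subset (Finset.filter_subset _ _),
    fun v hv => (Finset.mem_filter.1 hv).2, fun K hK hK1 => ?_⟩
  obtain ⟨v, hv⟩ : (K.filter fun v => 0 < x v.succ).Nonempty := by
    rw [Finset.nonempty_iff_ne_empty]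
    intro h
    have := hansenPairing_filter_pos hx hK hK1
    rw [h, hansenPairing_hansenVert, Finset.sum_empty] at this
    exact hx0 (by linarith)
  obtain ⟨hvK, hvpos⟩ := Finset.mem_filter.1 hv
  exact ⟨v, Finset.mem_inter.2 ⟨hvK, Finset.mem_filter.2
    ⟨mem_right_of_union_eq_univ hcover fun hvC => (hC v hvC).not_gt hvpos, hvpos⟩⟩⟩

theorem exists_hansenVert_eq_on_tight (hcover : C ∪ S = Finset.univ)
    (hC : G.IsClique (C : Set (Fin n))) (hS : IsStable G S)
    (hx : x ∈ hansenPairing.polar (hansenVerts Gᶜ)) (hx0 : x 0 ≠ -1) :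
    ∃ I, IsStable G I ∧ ∀ K : Finset (Fin n), G.IsClique (K : Set (Fin n)) →
      |hansenPairing (hansenVert K) x| = 1 →
        hansenPairing (hansenVert K) (hansenVert I) = hansenPairing (hansenVert K) x := by
  obtain ⟨I, hI, hIpos, hmeet⟩ : ∃ I, IsStable G I ∧ (∀ v ∈ I, 0 < x v.succ) ∧
      ∀ K : Finset (Fin n), G.IsClique (K : Set (Fin n)) →
        hansenPairing (hansenVert K) x = 1 → (K ∩ I).Nonempty := by
    by_cases hpos : ∃ c ∈ C, 0 < x c.succ
    · obtain ⟨c, hcC, hc⟩ := hpos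
      exact exists_isStable_meets_tight_of_pos hcover hC hS hx hcC hc
    · simp only [not_exists, not_and, not_lt] at hpos
      exact exists_isStable_meets_tight_of_nonpos hcover hS hx hx0 hpos
  refine ⟨I, hI, fun K hK hK1 => ?_⟩
  rw [hansenPairing_hansenVert_hansenVert]
  rcases (abs_eq zero_le_one).1 hK1 with h | h
  · rw [h, le_antisymm (hI.card_inter_le_one hK) (hmeet K hK h).card_pos]
    norm_num
  · have : K ∩ I = ∅ := Finset.eq_empty_of_forall_notMem fun v hv => by
      rw [Finset.mem_inter] at hv
      exact (hIpos v hv.2).not_ge (nonpos_of_hansenPairing_eq_neg_one hx hK h hv.1)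
    rw [h, this]
    norm_num

theorem hansenPolytope_eq_polar (hcover : C ∪ S = Finset.univ)
    (hC : G.IsClique (C : Set (Fin n))) (hS : IsStable G S) :
    hansenPolytope G = hansenPairing.polar (hansenVerts Gᶜ) := by
  rw [hansenPolytope_eq_convexHull]
  refine convexHull_eq_polar (hansenVerts_finite G) (hansenVerts_finite Gᶜ)
    (hansenVerts_subset_polar G) (isCompact_polar_hansenVerts_compl G) fun x hx => ?_
  obtain ⟨σ, hσ, hσx⟩ : ∃ σ : ℝ, (σ = 1 ∨ σ = -1) ∧ (σ • x) 0 ≠ -1 := by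
    by_cases hx0 : x 0 = -1
    · exact ⟨-1, Or.inr rfl, by norm_num [hx0]⟩
    · exact ⟨1, Or.inl rfl, by simpa using hx0⟩
  have hσ_abs : ∀ K : Finset (Fin n),
      |hansenPairing (hansenVert K) (σ • x)| = |hansenPairing (hansenVert K) x| := fun K => by
    rw [map_smul, smul_eq_mul, abs_mul, abs_eq_one_of_sign hσ, one_mul]
  have hσxP : σ • x ∈ hansenPairing.polar (hansenVerts Gᶜ) := mem_polar_hansenVerts_compl.2
    fun K hK => hσ_abs K ▸ mem_polar_hansenVerts_compl.1 hx K hK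
  obtain ⟨I, hI, hIx⟩ := exists_hansenVert_eq_on_tight hcover hC hS hσxP hσx
  refine ⟨σ • hansenVert I, ⟨σ, hσ, I, hI, rfl⟩, ?_⟩
  rintro _ ⟨ε, hε, K, hK, rfl⟩ htight
  rw [map_smul, LinearMap.smul_apply, norm_smul, Real.norm_eq_abs, abs_eq_one_of_sign hε, one_mul,
    Real.norm_eq_abs] at htight
  have := hIx K (isStable_compl_iff.1 hK) (hσ_abs K ▸ htight)
  simp only [map_smul, LinearMap.smul_apply, smul_eq_mul] at this ⊢
  linear_combination σ * ε * this + ε * hansenPairing (hansenVert K) x * mul_self_eq_one_of_sign hσ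

theorem isPolarPair_hansenVerts (hcover : C ∪ S = Finset.univ)
    (hC : G.IsClique (C : Set (Fin n))) (hS : IsStable G S) :
    IsPolarPair hansenPairing (hansenVerts G) (hansenVerts Gᶜ) := by
  refine ⟨hansenVerts_finite G, hansenVerts_finite Gᶜ, ?_, ?_⟩
  · rw [← hansenPolytope_eq_convexHull, hansenPolytope_eq_polar hcover hC hS]
  · rw [← hansenPolytope_eq_convexHull, hansenPolytope_eq_polar (C := S) (S := C)
      (by rw [Finset.union_comm, hcover]) hS.isClique_compl (isStable_compl_iff.2 hC), compl_compl]

end Split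

section Faces

variable {n : ℕ} {G : SimpleGraph (Fin n)} {C S : Finset (Fin n)} {F : Set (Fin (n + 1) → ℝ)}

theorem smul_hansenVert_erase_mem_toExposed {l : (Fin (n + 1) → ℝ) →L[ℝ] ℝ} {ε : ℝ}
    (hε : ε = 1 ∨ ε = -1) {I : Finset (Fin n)} (hI : IsStable G I) {c : Fin n} (hc : c ∈ I)
    (hmem : ε • hansenVert I ∈ l.toExposed (hansenPolytope G)) :
    0 ≤ ε * l (Pi.single c.succ 1) ∧ (ε * l (Pi.single c.succ 1) = 0 →
      ε • hansenVert (I.erase c) ∈ l.toExposed (hansenPolytope G)) := by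
  have hmem' := smul_hansenVert_mem hε (hI.subset (I.erase_subset c))
  have hl : l (ε • hansenVert I) = l (ε • hansenVert (I.erase c)) + ε * l (Pi.single c.succ 1) := by
    rw [hansenVert_eq_add_single hc, smul_add, map_add, map_smul l ε (Pi.single _ _), smul_eq_mul]
  have hle := hmem.2 _ hmem'
  refine ⟨by linarith, fun h0 => ⟨hmem', fun y hy => ?_⟩⟩
  linarith [hmem.2 y hy]

theorem smul_hansenVert_erase_mem_of_neg_mem {l : (Fin (n + 1) → ℝ) →L[ℝ] ℝ} {σ : ℝ}
    (hσ : σ = 1 ∨ σ = -1) {I J : Finset (Fin n)} (hI : IsStable G I) (hJ : IsStable G J)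
    {c : Fin n} (hcI : c ∈ I) (hcJ : c ∈ J)
    (hIF : -σ • hansenVert I ∈ l.toExposed (hansenPolytope G))
    (hJF : σ • hansenVert J ∈ l.toExposed (hansenPolytope G)) :
    σ • hansenVert (J.erase c) ∈ l.toExposed (hansenPolytope G) := by
  have hneg := (smul_hansenVert_erase_mem_toExposed (by rcases hσ with rfl | rfl <;> simp)
    hI hcI hIF).1
  have hpos := smul_hansenVert_erase_mem_toExposed hσ hJ hcJ hJF
  exact hpos.2 (by linarith [hpos.1])

theorem erase_subset_of_mem_clique (hcover : C ∪ S = Finset.univ)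
    (hC : G.IsClique (C : Set (Fin n))) {J : Finset (Fin n)} (hJ : IsStable G J) {c : Fin n}
    (hcC : c ∈ C) (hcJ : c ∈ J) : J.erase c ⊆ S := fun v hv => by
  obtain ⟨hvc, hvJ⟩ := Finset.mem_erase.1 hv
  refine mem_right_of_union_eq_univ hcover fun hvC => hvc ?_
  exact Finset.card_le_one.1 (hJ.card_inter_le_one hC) v (Finset.mem_inter.2 ⟨hvC, hvJ⟩)
    c (Finset.mem_inter.2 ⟨hcC, hcJ⟩)

theorem subset_hFace_of_forall_vertex {ε : ℝ} {K : Finset (Fin n)}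
    (hF : IsExposed ℝ (hansenPolytope G) F)
    (h : ∀ v ∈ hansenVerts G ∩ F, hansenPairing (ε • hansenVert K) v = 1) :
    F ⊆ hFace G ε K := by
  rw [hansenPolytope_eq_convexHull] at hF
  intro x hx
  refine mem_hFace.2 ⟨(hansenPolytope_eq_convexHull G).symm ▸ hF.subset hx, ?_⟩
  rw [hF.eq_convexHull_inter (hansenVerts_finite G)] at hx
  exact convexHull_min h (convex_hyperplane (hansenPairing _).isLinear 1) hx

theorem exists_smul_hansenVert_mem_of_forall_not_subset_hFace (hcover : C ∪ S = Finset.univ)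
    (hC : G.IsClique (C : Set (Fin n))) (hF : IsExposed ℝ (hansenPolytope G) F)
    (hne : F.Nonempty) {σ : ℝ} (hσ : σ = 1 ∨ σ = -1) (hnot : ∀ B ⊆ C, ¬ F ⊆ hFace G σ B) :
    ∃ I ⊆ S, IsStable G I ∧ σ • hansenVert I ∈ F := by
  classical
  by_contra! hno
  obtain ⟨l, hl⟩ := hF hne
  replace hl : F = l.toExposed (hansenPolytope G) := hl
  -- otherwise `F` lies on the facet `[σ, B]` of the elements of `C` used by its `σ`-vertices
  set B := C.filter fun c => ∃ J, IsStable G J ∧ σ • hansenVert J ∈ F ∧ c ∈ J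
  have hB : G.IsClique (B : Set (Fin n)) := hC.subset (Finset.coe_subset.2 (C.filter_subset _))
  refine hnot B (C.filter_subset _) (subset_hFace_of_forall_vertex hF ?_)
  rintro _ ⟨⟨ε, hε, I, hI, rfl⟩, hIF⟩
  simp only [map_smul, LinearMap.smul_apply, smul_eq_mul, hansenPairing_hansenVert_hansenVert]
  obtain rfl | rfl : ε = σ ∨ ε = -σ := by
    rcases hε with rfl | rfl <;> rcases hσ with rfl | rfl <;> simp
  · obtain ⟨c, hcI, hcS⟩ := Finset.not_subset.1 fun hIS => hno I hIS hI hIF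
    have hcC : c ∈ C := by_contra fun hcC => hcS (mem_right_of_union_eq_univ hcover hcC)
    have hcB : c ∈ B ∩ I := Finset.mem_inter.2 ⟨Finset.mem_filter.2 ⟨hcC, I, hI, hIF, hcI⟩, hcI⟩
    rw [le_antisymm (hI.card_inter_le_one hB) (Finset.card_pos.2 ⟨c, hcB⟩)]
    linear_combination mul_self_eq_one_of_sign hσ
  · have hBI : B ∩ I = ∅ := Finset.eq_empty_of_forall_notMem fun c hc => by
      obtain ⟨hcB, hcI⟩ := Finset.mem_inter.1 hc
      obtain ⟨hcC, J, hJ, hJF, hcJ⟩ := Finset.mem_filter.1 hcB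
      exact hno (J.erase c) (erase_subset_of_mem_clique hcover hC hJ hcC hcJ)
        (hJ.subset (J.erase_subset c))
        (hl ▸ smul_hansenVert_erase_mem_of_neg_mem hσ hI hJ hcI hcJ (hl ▸ hIF) (hl ▸ hJF))
    rw [hBI, Finset.card_empty]
    linear_combination mul_self_eq_one_of_sign hσ

end Faces

section Counting

variable {n : ℕ} {G : SimpleGraph (Fin n)} {C S : Finset (Fin n)} {F : Set (Fin (n + 1) → ℝ)}

theorem hansenPolytope_dualFace_spec (hcover : C ∪ S = Finset.univ)
    (hC : G.IsClique (C : Set (Fin n))) (hS : IsStable G S)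
    (hF : IsExposed ℝ (hansenPolytope G) F) (hne : F.Nonempty) (hFP : F ≠ hansenPolytope G) :
    IsExposed ℝ (hansenPolytope Gᶜ) (dualFace hansenPairing (hansenPolytope Gᶜ) F) ∧
      (dualFace hansenPairing (hansenPolytope Gᶜ) F).Nonempty ∧
      dualFace hansenPairing (hansenPolytope Gᶜ) F ≠ hansenPolytope Gᶜ ∧
      dualFace hansenPairing (hansenPolytope G)
        (dualFace hansenPairing (hansenPolytope Gᶜ) F) = F := by
  simp only [hansenPolytope_eq_convexHull] at *
  exact (isPolarPair_hansenVerts hcover hC hS).dualFace_spec hansenPairing_isSymm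
    hansenPairing_surjective hF hne hFP

theorem smul_hansenVert_mem_dualFace {ε : ℝ} (hε : ε = 1 ∨ ε = -1) {K : Finset (Fin n)}
    (hK : G.IsClique (K : Set (Fin n))) (hF : F ⊆ hFace G ε K) :
    ε • hansenVert K ∈ dualFace hansenPairing (hansenPolytope Gᶜ) F :=
  ⟨smul_hansenVert_mem hε (isStable_compl_iff.2 hK), fun _ hx => (mem_hFace.1 (hF hx)).2⟩

theorem dualFace_subset_hFace {ε : ℝ} {K : Finset (Fin n)} (hK : ε • hansenVert K ∈ F) :
    dualFace hansenPairing (hansenPolytope G) F ⊆ hFace G ε K := fun _ hx =>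
  mem_hFace.2 ⟨hx.1, (hansenPairing_isSymm.eq _ _).trans (hx.2 _ hK)⟩

theorem hansenPolytope_mem_primitive (G : SimpleGraph (Fin n)) (C : Finset (Fin n)) :
    IsExposed ℝ (hansenPolytope G) (hansenPolytope G) ∧ (hansenPolytope G).Nonempty ∧
      ∀ ε : ℝ, (ε = 1 ∨ ε = -1) → ∀ B ⊆ C, ¬ hansenPolytope G ⊆ hFace G ε B :=
  ⟨IsExposed.refl _, ⟨_, smul_hansenVert_mem (Or.inl rfl) isStable_empty⟩,
    fun _ hε B _ => hansenPolytope_not_subset_hFace hε B⟩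

theorem bijOn_dualFace_small_primitive (hdisj : Disjoint C S) (hcover : C ∪ S = Finset.univ)
    (hC : G.IsClique (C : Set (Fin n))) (hS : IsStable G S) :
    Set.BijOn (dualFace hansenPairing (hansenPolytope Gᶜ))
      {F | IsExposed ℝ (hansenPolytope G) F ∧ F.Nonempty ∧
        (∃ B ⊆ C, F ⊆ hFace G 1 B) ∧ (∃ B' ⊆ C, F ⊆ hFace G (-1) B')}
      ({F | IsExposed ℝ (hansenPolytope Gᶜ) F ∧ F.Nonempty ∧
        (∀ ε : ℝ, (ε = 1 ∨ ε = -1) → ∀ B ⊆ S, ¬ F ⊆ hFace Gᶜ ε B)} \ {hansenPolytope Gᶜ}) := by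
  have hspec : ∀ {F}, F ∈ {F | IsExposed ℝ (hansenPolytope G) F ∧ F.Nonempty ∧
      (∃ B ⊆ C, F ⊆ hFace G 1 B) ∧ (∃ B' ⊆ C, F ⊆ hFace G (-1) B')} → _ :=
    fun {F} ⟨hF, hne, ⟨B, _, hB⟩, _⟩ => hansenPolytope_dualFace_spec hcover hC hS hF hne
      fun h => hansenPolytope_not_subset_hFace (Or.inl rfl) B (h ▸ hB)
  refine ⟨fun F hFs => ?_, fun F₁ h₁ F₂ h₂ heq => ?_, fun F' ⟨⟨hF', hne', hprim⟩, hF'P⟩ => ?_⟩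
  · obtain ⟨hexp, hne, hne', -⟩ := hspec hFs
    obtain ⟨-, -, ⟨B₁, hB₁C, hB₁⟩, ⟨B₂, hB₂C, hB₂⟩⟩ := hFs
    refine ⟨⟨hexp, hne, fun ε hε B hBS hsub => ?_⟩, hne'⟩
    obtain ⟨K, hKC, hK⟩ : ∃ K ⊆ C, F ⊆ hFace G ε K := by
      rcases hε with rfl | rfl
      exacts [⟨B₁, hB₁C, hB₁⟩, ⟨B₂, hB₂C, hB₂⟩]
    exact smul_hansenVert_not_mem_hFace hε (hdisj.symm.mono hBS hKC)
      (hsub (smul_hansenVert_mem_dualFace hε (hC.subset (Finset.coe_subset.2 hKC)) hK))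
  · rw [← (hspec h₁).2.2.2, heq, (hspec h₂).2.2.2]
  · have hcover' : S ∪ C = Finset.univ := by rw [Finset.union_comm, hcover]
    obtain ⟨hexp, hne, hneP, hbidual⟩ := compl_compl G ▸ hansenPolytope_dualFace_spec hcover'
      hS.isClique_compl (isStable_compl_iff.2 hC) hF' hne' hF'P
    have hsub : ∀ σ : ℝ, (σ = 1 ∨ σ = -1) → ∃ K ⊆ C,
        dualFace hansenPairing (hansenPolytope G) F' ⊆ hFace G σ K := fun σ hσ => by
      obtain ⟨K, hKC, -, hK⟩ := exists_smul_hansenVert_mem_of_forall_not_subset_hFace hcover'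
        hS.isClique_compl hF' hne' hσ (hprim σ hσ)
      exact ⟨K, hKC, dualFace_subset_hFace hK⟩
    exact ⟨_, ⟨hexp, hne, hsub 1 (Or.inl rfl), hsub (-1) (Or.inr rfl)⟩, hbidual⟩

theorem finite_faces (G : SimpleGraph (Fin n)) :
    {F | IsExposed ℝ (hansenPolytope G) F ∧ F.Nonempty}.Finite :=
  (finite_setOf_isExposed_convexHull (hansenVerts_finite G)).subset fun _ hF =>
    hansenPolytope_eq_convexHull G ▸ hF.1

theorem numFaces_eq_add (G : SimpleGraph (Fin n)) (C : Finset (Fin n)) :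
    numFaces (hansenPolytope G) =
      primCount G C + signedCount G C 1 + signedCount G C (-1) + smallCount G C := by
  set T := fun F : Set (Fin (n + 1) → ℝ) => IsExposed ℝ (hansenPolytope G) F ∧ F.Nonempty
  set p := fun F => ∃ B ⊆ C, F ⊆ hFace G 1 B
  set q := fun F => ∃ B ⊆ C, F ⊆ hFace G (-1) B
  have hfin : {F | T F}.Finite := finite_faces G
  have e₁ := Set.ncard_setOf_eq_add hfin p
  have e₂ := Set.ncard_setOf_eq_add (r := fun F => T F ∧ p F) (hfin.subset fun _ hF => hF.1) q
  have e₃ := Set.ncard_setOf_eq_add (r := fun F => T F ∧ ¬p F) (hfin.subset fun _ hF => hF.1) q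
  beta_reduce at e₂ e₃
  have h₀ : primCount G C = {F | (T F ∧ ¬p F) ∧ ¬q F}.ncard := by
    simp only [primCount, T, p, q, forall_eq_or_imp, forall_eq, not_exists, not_and, and_assoc]
  have h₁ : signedCount G C 1 = {F | (T F ∧ p F) ∧ ¬q F}.ncard := by
    simp only [signedCount, T, p, q, not_exists, not_and, and_assoc]
  have h₂ : signedCount G C (-1) = {F | (T F ∧ ¬p F) ∧ q F}.ncard := by
    simp only [signedCount, T, p, q, neg_neg, not_exists, not_and, and_assoc]
    congr 1
    ext F
    exact ⟨fun ⟨h₁, h₂, h₃, h₄⟩ => ⟨h₁, h₂, h₄, h₃⟩, fun ⟨h₁, h₂, h₃, h₄⟩ => ⟨h₁, h₂, h₄, h₃⟩⟩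
  have h₃ : smallCount G C = {F | (T F ∧ p F) ∧ q F}.ncard := by
    simp only [smallCount, T, p, q, and_assoc]
  change {F | T F}.ncard = _
  rw [h₀, h₁, h₂, h₃]
  omega

end Counting

/-- For a split graph `G = C ∪ S` on `d − 1` vertices,
`s(H(G)) = f_p(G) + f_+(G) + f_-(G) + f_p(Ḡ) − 1`, where the primitive faces of
`H(Ḡ) = H(Gᶜ)` are taken with respect to its type-(1)-facets `[ε, B]`, `B ⊆ S`;
equivalently, the number of nonempty small faces of `H(G)` equals `f_p(Ḡ) − 1`. -/
theorem hansen_split_face_partition {n : ℕ} (G : SimpleGraph (Fin n))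
    (C S : Finset (Fin n)) (hdisj : Disjoint C S) (hcover : C ∪ S = Finset.univ)
    (hC : G.IsClique (↑C : Set (Fin n))) (hS : IsStable G S) :
    numFaces (hansenPolytope G) =
        primCount G C + signedCount G C 1 + signedCount G C (-1) + primCount Gᶜ S - 1 ∧
      smallCount G C = primCount Gᶜ S - 1 := by
  have hsmall : smallCount G C + 1 = primCount Gᶜ S := by
    rw [smallCount, (bijOn_dualFace_small_primitive hdisj hcover hC hS).ncard_eq, primCount]
    exact Set.ncard_sdiff_singleton_add_one (hansenPolytope_mem_primitive Gᶜ S)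
      ((finite_faces Gᶜ).subset fun _ hF => ⟨hF.1, hF.2.1⟩)
  have := numFaces_eq_add G C
  omega
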